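/- Let Ψ be a sound class of weights (over Set) and T a Ψ-theory. Then every functor φ : T ⥤ Set that preserves Ψ-limits is Ψ-flat when regarded as a weight on Tᵒᵖ (i.e., Colim_φ : (Tᵒᵖ ⥤ Set) ⥤ Set preserves the ψ-weighted limits of all diagrams Dᵒᵖ ⥤ (Tᵒᵖ ⥤ Set), for all ψ in Ψ). Consequently, Ψ⁺(Tᵒᵖ) = Ψ-Alg(T) as full subcategories of the functor category [T, Set]. -/

import Mathlib

/-!
By soundness, `φ` is flat as soon as `Colim_φ` preserves the `ψ`-weighted limits of the
representable diagrams `d ↦ Tᵒᵖ(S d, −)`. In a `Ψ`-theory such a limit is again representable,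
by `op L` with `L` the `ψ`-weighted limit of `S` in `T`, and by co-Yoneda `Colim_φ` sends
`Tᵒᵖ(op L, −)` to `φ(L)`; so the comparison map becomes `φ(L) → Nat(ψ, φ ∘ S)`, a bijection when
`φ` preserves `Ψ`-limits.

For the second part, representables preserve `Ψ`-limits and flat weighted colimits commute with
them, which gives `Ψ⁺(Tᵒᵖ) ⊆ Ψ-Alg(T)`. Conversely every `φ` is the `φ`-weighted colimit of the
representables, and an algebra `φ` is a flat weight by the first part.
-/
open CategoryTheory CategoryTheory.Limits Opposite
namespace Paper
abbrev elCat {E : Type} [SmallCategory E] (φ : Eᵒᵖ ⥤ Type) : Type :=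
  (Functor.Elements φ)ᵒᵖ
def elProj {E : Type} [SmallCategory E] (φ : Eᵒᵖ ⥤ Type) : elCat φ ⥤ E :=
  (CategoryOfElements.π φ).leftOp
noncomputable def wColim {E : Type} [SmallCategory E] (φ : Eᵒᵖ ⥤ Type) :
    (E ⥤ Type) ⥤ Type :=
  (Functor.whiskeringLeft (elCat φ) E Type).obj (elProj φ) ⋙ colim
def wLim {D E : Type} [SmallCategory D] [SmallCategory E]
    (ψ : Dᵒᵖ ⥤ Type) (G : Dᵒᵖ ⥤ E ⥤ Type) : E ⥤ Type :=
  G.flip ⋙ coyoneda.obj (op ψ)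
def wLimEval {D E : Type} [SmallCategory D] [SmallCategory E]
    (ψ : Dᵒᵖ ⥤ Type) (G : Dᵒᵖ ⥤ E ⥤ Type) (d : Dᵒᵖ) (y : ψ.obj d) :
    wLim ψ G ⟶ G.obj d where
  app _ := TypeCat.ofHom (fun α => α.app d y)
  naturality _ _ _ := rfl
def wLimComparison {D E : Type} [SmallCategory D] [SmallCategory E]
    (H : (E ⥤ Type) ⥤ Type) (ψ : Dᵒᵖ ⥤ Type) (G : Dᵒᵖ ⥤ E ⥤ Type) :
    H.obj (wLim ψ G) → (ψ ⟶ G ⋙ H) := fun z =>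
  { app := fun d => TypeCat.ofHom (fun y => H.map (wLimEval ψ G d y) z)
    naturality := fun d d' g => by
      ext y
      have h : wLimEval ψ G d' (ψ.map g y) = wLimEval ψ G d y ≫ G.map g := by
        ext e α
        exact ConcreteCategory.congr_hom (α.naturality g) y
      simp [h] }
structure Weight : Type 1 where
  D : Type
  [instD : SmallCategory D]
  w : Dᵒᵖ ⥤ Type
attribute [instance] Weight.instD
abbrev WeightClass : Type 1 := Weight → Prop
def IsFlat (Ψ : WeightClass) {E : Type} [SmallCategory E] (φ : Eᵒᵖ ⥤ Type) : Prop :=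
  ∀ W : Weight, Ψ W → ∀ G : W.Dᵒᵖ ⥤ E ⥤ Type,
    Function.Bijective (wLimComparison (wColim φ) W.w G)
def IsSound (Ψ : WeightClass) : Prop :=
  ∀ (E : Type) [SmallCategory E] (φ : Eᵒᵖ ⥤ Type),
    (∀ W : Weight, Ψ W → ∀ T : W.D ⥤ E,
      Function.Bijective (wLimComparison (wColim φ) W.w (T.op ⋙ coyoneda))) →
    IsFlat Ψ φ

/-- Given a weighted cone `p : ψ ⟶ T(L, G −)` on a diagram `G : Dᵒᵖ ⥤ T` with
vertex `L`, and a functor `φ : T ⥤ Set`, the induced map `φ(L) → Nat(ψ, φ ∘ G)`. -/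
def wConeMap {D T : Type} [SmallCategory D] [SmallCategory T]
    (ψ : Dᵒᵖ ⥤ Type) (G : Dᵒᵖ ⥤ T) (L : T)
    (p : ψ ⟶ G ⋙ coyoneda.obj (op L)) (φ : T ⥤ Type) (z : φ.obj L) :
    ψ ⟶ G ⋙ φ where
  app d := TypeCat.ofHom (fun y => φ.map (p.app d y) z)
  naturality d d' g := by
    ext y
    have h := ConcreteCategory.congr_hom (p.naturality g) y
    dsimp at h ⊢
    rw [h, φ.map_comp]
    rfl

/-- `p : ψ ⟶ T(L, G −)` exhibits `L` as the `ψ`-weighted limit of `G`: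
the induced maps `T(X, L) → Nat(ψ, T(X, G −))` are bijections. -/
def IsWLimCone {D T : Type} [SmallCategory D] [SmallCategory T]
    (ψ : Dᵒᵖ ⥤ Type) (G : Dᵒᵖ ⥤ T) (L : T)
    (p : ψ ⟶ G ⋙ coyoneda.obj (op L)) : Prop :=
  ∀ X : T, Function.Bijective (wConeMap ψ G L p (coyoneda.obj (op X)))

/-- A `Ψ`-theory: a small category with `ψ`-weighted limits for all `ψ` in `Ψ`. -/
def IsPsiTheory (Ψ : WeightClass) (T : Type) [SmallCategory T] : Prop :=
  ∀ W : Weight, Ψ W → ∀ G : W.Dᵒᵖ ⥤ T,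
    ∃ (L : T) (p : W.w ⟶ G ⋙ coyoneda.obj (op L)), IsWLimCone W.w G L p

/-- A functor `φ : T ⥤ Set` preserves `Ψ`-limits. -/
def PreservesPsiLimits (Ψ : WeightClass) {T : Type} [SmallCategory T]
    (φ : T ⥤ Type) : Prop :=
  ∀ W : Weight, Ψ W → ∀ (G : W.Dᵒᵖ ⥤ T) (L : T)
    (p : W.w ⟶ G ⋙ coyoneda.obj (op L)), IsWLimCone W.w G L p →
    Function.Bijective (wConeMap W.w G L p φ)

/-- The pointwise `γ`-weighted colimit of a diagram `H : J ⥤ [T, Set]`: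
`(Colim_γ H)(t) = Colim_γ (j ↦ H(j)(t))`. -/
noncomputable def pointwiseWColim {J T : Type} [SmallCategory J] [SmallCategory T]
    (γ : Jᵒᵖ ⥤ Type) (H : J ⥤ T ⥤ Type) : T ⥤ Type :=
  H.flip ⋙ wColim γ

/-- `Ψ⁺(Tᵒᵖ)`: the smallest replete full subcategory of `[T, Set]` containing the
representables and closed under `γ`-weighted colimits for all `Ψ`-flat weights `γ`. -/
inductive PsiPlusClosure (Ψ : WeightClass) (T : Type) [SmallCategory T] :
    (T ⥤ Type) → Prop
  | rep (t : T) : PsiPlusClosure Ψ T (coyoneda.obj (op t))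
  | iso {F G : T ⥤ Type} : PsiPlusClosure Ψ T F → Nonempty (F ≅ G) →
      PsiPlusClosure Ψ T G
  | wcolim (W : Weight) (hW : IsFlat Ψ W.w) (H : W.D ⥤ T ⥤ Type)
      (hH : ∀ j : W.D, PsiPlusClosure Ψ T (H.obj j)) :
      PsiPlusClosure Ψ T (pointwiseWColim W.w H)

/-- `Ψ(D)`: the free `Ψ`-cocompletion of `D` inside `[Dᵒᵖ, Set]`, i.e. the smallest
replete full subcategory containing the representables and closed under `ψ`-weighted
colimits for `ψ` in `Ψ`. -/
inductive PsiCocompletion (Ψ : WeightClass) (D : Type) [SmallCategory D] :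
    (Dᵒᵖ ⥤ Type) → Prop
  | rep (d : D) : PsiCocompletion Ψ D (yoneda.obj d)
  | iso {F G : Dᵒᵖ ⥤ Type} : PsiCocompletion Ψ D F → Nonempty (F ≅ G) →
      PsiCocompletion Ψ D G
  | wcolim (W : Weight) (hW : Ψ W) (H : W.D ⥤ Dᵒᵖ ⥤ Type)
      (hH : ∀ j : W.D, PsiCocompletion Ψ D (H.obj j)) :
      PsiCocompletion Ψ D (pointwiseWColim W.w H)

/-- `Ψ` is locally small: each `Ψ(D)` is essentially small. -/
def IsLocallySmall (Ψ : WeightClass) : Prop :=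
  ∀ (D : Type) [SmallCategory D], ∃ (ι : Type) (f : ι → (Dᵒᵖ ⥤ Type)),
    ∀ F : Dᵒᵖ ⥤ Type, PsiCocompletion Ψ D F → ∃ i : ι, Nonempty (F ≅ f i)

/-- `Ψ` is saturated: the objects of `Ψ(D)` are, up to isomorphism, exactly the
weights `Dᵒᵖ ⥤ Set` belonging to `Ψ`. -/
def IsSaturated (Ψ : WeightClass) : Prop :=
  ∀ (D : Type) [SmallCategory D] (F : Dᵒᵖ ⥤ Type),
    PsiCocompletion Ψ D F ↔ ∃ G : Dᵒᵖ ⥤ Type, Ψ (Weight.mk D G) ∧ Nonempty (F ≅ G)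

/-- The closure of `Ψ(D)` in `[Dᵒᵖ, Set]` under `γ`-weighted colimits for all
`Ψ`-flat weights `γ`. -/
inductive FlatClosure (Ψ : WeightClass) (D : Type) [SmallCategory D] :
    (Dᵒᵖ ⥤ Type) → Prop
  | base {F : Dᵒᵖ ⥤ Type} : PsiCocompletion Ψ D F → FlatClosure Ψ D F
  | iso {F G : Dᵒᵖ ⥤ Type} : FlatClosure Ψ D F → Nonempty (F ≅ G) → FlatClosure Ψ D G
  | wcolim (W : Weight) (hW : IsFlat Ψ W.w) (H : W.D ⥤ Dᵒᵖ ⥤ Type)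
      (hH : ∀ j : W.D, FlatClosure Ψ D (H.obj j)) :
      FlatClosure Ψ D (pointwiseWColim W.w H)

theorem bijective_iff_of_comm {α β α' β' : Type*} {f : α → β} {f' : α' → β'} (ea : α' ≃ α)
    (eb : β' ≃ β) (h : ∀ a, f (ea a) = eb (f' a)) :
    Function.Bijective f ↔ Function.Bijective f' := by
  rw [← ea.bijective_comp, show f ∘ ea = eb ∘ f' from funext h, eb.comp_bijective]

section CoYoneda

variable {E : Type} [SmallCategory E]

noncomputable def colimitElementsYonedaIso (φ : Eᵒᵖ ⥤ Type) : colimit (elProj φ ⋙ yoneda) ≅ φ :=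
  HasColimit.isoOfNatIso (Functor.isoWhiskerLeft (elProj φ) uliftYonedaIsoYoneda.{0}).symm ≪≫
    colimit.isoColimitCocone ⟨_, Presheaf.colimitOfRepresentable φ⟩

noncomputable def coyonedaCompWColimIso (φ : Eᵒᵖ ⥤ Type) : coyoneda ⋙ wColim φ ≅ φ :=
  (colimitIsoFlipCompColim (elProj φ ⋙ yoneda)).symm ≪≫ colimitElementsYonedaIso φ

end CoYoneda

noncomputable def pointwiseWColimCoyonedaIso {T : Type} [SmallCategory T] (φ : T ⥤ Type) :
    pointwiseWColim (unopUnop T ⋙ φ) coyoneda ≅ φ :=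
  Functor.isoWhiskerRight (NatIso.ofComponents (fun t => (Coyoneda.objOpOp t).symm) fun _ => rfl :
      (coyoneda : Tᵒᵖ ⥤ T ⥤ Type).flip ≅ opOp T ⋙ coyoneda) _ ≪≫
    Functor.isoWhiskerLeft (opOp T) (coyonedaCompWColimIso (unopUnop T ⋙ φ))

section RepresentableLimits

variable {D T : Type} [SmallCategory D] [SmallCategory T] {ψ : Dᵒᵖ ⥤ Type} {S : D ⥤ Tᵒᵖ} {L : T}

def wLimCoyonedaHom (p : ψ ⟶ (S.op ⋙ unopUnop T) ⋙ coyoneda.obj (op L)) :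
    coyoneda.obj (op (op L)) ⟶ wLim ψ (S.op ⋙ coyoneda) where
  app j := TypeCat.ofHom fun f =>
    { app d := TypeCat.ofHom fun y => (p.app d y).op ≫ f
      naturality d d' g := by
        ext y
        have hp := ConcreteCategory.congr_hom (p.naturality g) y
        dsimp at hp ⊢
        rw [hp, op_comp, Category.assoc]
        rfl }
  naturality _ _ _ := by
    ext f
    apply NatTrans.ext
    ext d y
    exact (Category.assoc _ _ _).symm

theorem wLimCoyonedaHom_comp_wLimEval (p : ψ ⟶ (S.op ⋙ unopUnop T) ⋙ coyoneda.obj (op L))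
    (d : Dᵒᵖ) (y : ψ.obj d) :
    wLimCoyonedaHom p ≫ wLimEval ψ (S.op ⋙ coyoneda) d y = coyoneda.map (p.app d y).op.op :=
  rfl

theorem IsWLimCone.isIso_wLimCoyonedaHom {p : ψ ⟶ (S.op ⋙ unopUnop T) ⋙ coyoneda.obj (op L)}
    (hp : IsWLimCone ψ (S.op ⋙ unopUnop T) L p) : IsIso (wLimCoyonedaHom p) := by
  rw [NatTrans.isIso_iff_isIso_app]
  intro j
  rw [isIso_iff_bijective]
  let homOpIso : (S.op ⋙ unopUnop T) ⋙ coyoneda.obj (op j.unop) ≅ (S.op ⋙ coyoneda).flip.obj j :=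
    NatIso.ofComponents fun _ => (Quiver.Hom.opEquiv).toIso
  refine (bijective_iff_of_comm Quiver.Hom.opEquiv ((Iso.refl ψ).homCongr homOpIso) ?_).2
    (hp j.unop)
  intro f
  ext d y
  exact op_comp.symm

end RepresentableLimits

theorem isFlat_of_preservesPsiLimits {Ψ : WeightClass} (hΨ : IsSound Ψ) {T : Type}
    [SmallCategory T] (hT : IsPsiTheory Ψ T) {φ : T ⥤ Type} (hφ : PreservesPsiLimits Ψ φ) :
    IsFlat Ψ (unopUnop T ⋙ φ) := by
  refine hΨ _ _ fun W hW S => ?_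
  obtain ⟨L, p, hp⟩ := hT W hW (S.op ⋙ unopUnop T)
  have := hp.isIso_wLimCoyonedaHom
  let coy := coyonedaCompWColimIso (unopUnop T ⋙ φ)
  refine (bijective_iff_of_comm
    ((coy.app (op (op L))).symm ≪≫ (wColim _).mapIso (asIso (wLimCoyonedaHom p))).toEquiv
    ((Iso.refl _).homCongr (Functor.isoWhiskerLeft S.op coy).symm) ?_).2 (hφ W hW _ L p hp)
  intro z
  ext d y
  change (wColim _).map (wLimEval _ _ d y) ((wColim _).map (wLimCoyonedaHom p)
    (coy.inv.app (op (op L)) z)) = coy.inv.app (S.op.obj d) (φ.map (p.app d y) z)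
  rw [← Functor.map_comp_apply, wLimCoyonedaHom_comp_wLimEval]
  exact (coy.inv.naturality_apply _ z).symm

section Algebras

variable {Ψ : WeightClass} {T : Type} [SmallCategory T]

theorem preservesPsiLimits_coyoneda (t : T) : PreservesPsiLimits Ψ (coyoneda.obj (op t)) :=
  fun _ _ _ _ _ hp => hp t

theorem PreservesPsiLimits.of_iso {φ φ' : T ⥤ Type} (i : φ ≅ φ') (hφ : PreservesPsiLimits Ψ φ) :
    PreservesPsiLimits Ψ φ' := by
  intro W hW G L p hp
  refine (bijective_iff_of_comm (i.app L).toEquiv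
    ((Iso.refl _).homCongr (Functor.isoWhiskerLeft G i)) ?_).2 (hφ W hW G L p hp)
  intro z
  ext d y
  exact (i.hom.naturality_apply (p.app d y) z).symm

def wLimFlipHom {D J : Type} [SmallCategory D] [SmallCategory J] (ψ : Dᵒᵖ ⥤ Type) (G : Dᵒᵖ ⥤ T)
    (L : T) (p : ψ ⟶ G ⋙ coyoneda.obj (op L)) (H : J ⥤ T ⥤ Type) :
    H.flip.obj L ⟶ wLim ψ (G ⋙ H.flip) where
  app j := TypeCat.ofHom (wConeMap ψ G L p (H.obj j))
  naturality _ _ v := by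
    ext z
    apply NatTrans.ext
    ext d y
    exact ((H.map v).naturality_apply (p.app d y) z).symm

theorem PreservesPsiLimits.pointwiseWColim {J : Type} [SmallCategory J] {γ : Jᵒᵖ ⥤ Type}
    (hγ : IsFlat Ψ γ) {H : J ⥤ T ⥤ Type} (hH : ∀ j, PreservesPsiLimits Ψ (H.obj j)) :
    PreservesPsiLimits Ψ (pointwiseWColim γ H) := by
  intro W hW G L p hp
  have : IsIso (wLimFlipHom W.w G L p H) := by
    rw [NatTrans.isIso_iff_isIso_app]
    exact fun j => (isIso_iff_bijective _).2 (hH j W hW G L p hp)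
  refine (bijective_iff_of_comm ((wColim γ).mapIso (asIso (wLimFlipHom W.w G L p H))).symm.toEquiv
    (Equiv.refl _) ?_).2 (hγ W hW (G ⋙ H.flip))
  intro z
  ext d y
  have hfac : wLimFlipHom W.w G L p H ≫ wLimEval W.w (G ⋙ H.flip) d y = H.flip.map (p.app d y) :=
    rfl
  change (wColim γ).map (H.flip.map (p.app d y))
    ((wColim γ).map (inv (wLimFlipHom W.w G L p H)) z) = (wColim γ).map (wLimEval _ _ d y) z
  rw [← Functor.map_comp_apply, ← hfac, IsIso.inv_hom_id_assoc]

theorem PsiPlusClosure.preservesPsiLimits {φ : T ⥤ Type} (h : PsiPlusClosure Ψ T φ) :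
    PreservesPsiLimits Ψ φ := by
  induction h with
  | rep t => exact preservesPsiLimits_coyoneda t
  | iso _ i ih => exact ih.of_iso i.some
  | wcolim W hW _ _ ih => exact PreservesPsiLimits.pointwiseWColim hW ih

theorem PsiPlusClosure.of_isFlat {φ : T ⥤ Type} (hφ : IsFlat Ψ (unopUnop T ⋙ φ)) :
    PsiPlusClosure Ψ T φ :=
  .iso (.wcolim ⟨Tᵒᵖ, unopUnop T ⋙ φ⟩ hφ coyoneda fun t => .rep t.unop)
    ⟨pointwiseWColimCoyonedaIso φ⟩

end Algebras

/-- If `Ψ` is sound and `T` is a `Ψ`-theory, then every functor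
`φ : T ⥤ Set` preserving `Ψ`-limits is `Ψ`-flat when regarded as a weight on `Tᵒᵖ`;
consequently `Ψ⁺(Tᵒᵖ) = Ψ-Alg(T)` as full subcategories of `[T, Set]`. -/
theorem sound_implies_algebras_are_flat (Ψ : WeightClass) (hΨ : IsSound Ψ)
    (T : Type) [SmallCategory T] (hT : IsPsiTheory Ψ T) :
    (∀ φ : T ⥤ Type, PreservesPsiLimits Ψ φ → IsFlat Ψ (unopUnop T ⋙ φ)) ∧
    (∀ φ : T ⥤ Type, PsiPlusClosure Ψ T φ ↔ PreservesPsiLimits Ψ φ) :=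
  ⟨fun _ => isFlat_of_preservesPsiLimits hΨ hT, fun _ =>
    ⟨PsiPlusClosure.preservesPsiLimits,
      fun hφ => .of_isFlat (isFlat_of_preservesPsiLimits hΨ hT hφ)⟩⟩

end Paper
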